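/- arXiv:1403.2137 — 2 statements merged into one kernel-verified Lean document; each statement's English description precedes it below -/
import Mathlib

section
/- Let m ≥ 2 and let φ^1, …, φ^{m+1} be samples in (Fin K → Fin p → ℝ). Let ν* : Fin m → Perm(Fin K) be an assignment minimizing the total variance V_m over all assignments of the first m samples. For an assignment σ : Fin m → Perm(Fin K) together with a permutation τ ∈ Perm(Fin K) for the new sample, let V_{m+1}(σ, τ) denote the total variance of the m+1 relabelled samples (σ_j • φ^j)_{j=1,…,m}, τ • φ^{m+1}. Suppose (σ**, τ**) minimizes V_{m+1} over all such pairs, and suppose that for every coordinate (k, l) the sample means of the first m relabelled samples agree: x̄_{k,l}(σ**) = x̄_{k,l}(ν*). Then the global minimum of V_{m+1} is attained while keeping the first m samples labelled by ν*: min_{τ ∈ Perm(Fin K)} V_{m+1}(ν*, τ) = V_{m+1}(σ**, τ**). -/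
open Finset

/-- Sample mean of a finite real sample. -/
noncomputable def sampleMean (n : ℕ) (y : Fin n → ℝ) : ℝ :=
  (1 / (n : ℝ)) * ∑ j, y j

/-- Unbiased sample variance of a finite real sample. -/
noncomputable def sampleVar (n : ℕ) (y : Fin n → ℝ) : ℝ :=
  (1 / ((n : ℝ) - 1)) * ∑ j, (y j - sampleMean n y) ^ 2

/-- Coordinatewise sample mean of the relabelled samples `ψ^j = σ_j • φ^j`,
where a permutation acts by `(σ • φ) k = φ (σ k)`. -/
noncomputable def coordMean {m K p : ℕ} (φ : Fin m → Fin K → Fin p → ℝ)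
    (σ : Fin m → Equiv.Perm (Fin K)) (k : Fin K) (l : Fin p) : ℝ :=
  sampleMean m (fun j => φ j (σ j k) l)

/-- Total variance of the relabelled samples: the sum over all coordinates `(k, l)`
of the unbiased sample variance of `(ψ^j_{k,l})_j` where `ψ^j = σ_j • φ^j`. -/
noncomputable def totalVar {m K p : ℕ} (φ : Fin m → Fin K → Fin p → ℝ)
    (σ : Fin m → Equiv.Perm (Fin K)) : ℝ :=
  ∑ k : Fin K, ∑ l : Fin p, sampleVar m (fun j => φ j (σ j k) l)

noncomputable def auxF (m : ℕ) (x z : ℝ) : ℝ :=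
  (1 / (m : ℝ)) * ((m : ℝ) * (x - ((m : ℝ) * x + z) / ((m : ℝ) + 1)) ^ 2
    + (z - ((m : ℝ) * x + z) / ((m : ℝ) + 1)) ^ 2)

lemma var_snoc (m : ℕ) (hm : 2 ≤ m) (y : Fin m → ℝ) (z : ℝ) :
    sampleVar (m + 1) (Fin.snoc y z) =
      (((m : ℝ) - 1) / m) * sampleVar m y + auxF m (sampleMean m y) z := by
  have hm0 : (m : ℝ) ≠ 0 := by positivity
  have hm1 : (m : ℝ) - 1 ≠ 0 := by
    have : (2 : ℝ) ≤ m := by exact_mod_cast hm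
    linarith
  have hm2 : (m : ℝ) + 1 ≠ 0 := by positivity
  set x := sampleMean m y with hx
  have hsum : ∑ j, y j = (m : ℝ) * x := by
    rw [hx]; unfold sampleMean; field_simp
  have hμ : sampleMean (m + 1) (Fin.snoc y z) = ((m : ℝ) * x + z) / ((m : ℝ) + 1) := by
    unfold sampleMean
    rw [Fin.sum_univ_castSucc]
    simp only [Fin.snoc_castSucc, Fin.snoc_last, hsum]
    push_cast
    field_simp
  have hzero : ∑ j, (y j - x) = 0 := by
    rw [Finset.sum_sub_distrib, hsum, Finset.sum_const, Finset.card_univ, Fintype.card_fin,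
      nsmul_eq_mul]
    ring
  have hS : ∑ j, (y j - x) ^ 2 = ((m : ℝ) - 1) * sampleVar m y := by
    unfold sampleVar; rw [← hx]; field_simp
  set μ := ((m : ℝ) * x + z) / ((m : ℝ) + 1) with hμdef
  have expand : ∑ j, (y j - μ) ^ 2
      = ∑ j, (y j - x) ^ 2 + 2 * (x - μ) * ∑ j, (y j - x) + (m : ℝ) * (x - μ) ^ 2 := by
    have h : ∀ j, (y j - μ) ^ 2 = (y j - x) ^ 2 + 2 * (x - μ) * (y j - x) + (x - μ) ^ 2 :=
      fun j => by ring
    simp_rw [h]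
    rw [Finset.sum_add_distrib, Finset.sum_add_distrib, ← Finset.mul_sum, Finset.sum_const,
      Finset.card_univ, Fintype.card_fin, nsmul_eq_mul]
  unfold sampleVar
  rw [hμ, Fin.sum_univ_castSucc]
  simp only [Fin.snoc_castSucc, Fin.snoc_last, ← hμdef]
  rw [expand, hzero, hS]
  unfold auxF
  rw [← hμdef]
  push_cast
  field_simp
  ring_nf
  field_simp
  ring
lemma totalVar_snoc {m K p : ℕ} (hm : 2 ≤ m) (φ : Fin m → Fin K → Fin p → ℝ)
    (φnew : Fin K → Fin p → ℝ) (σ : Fin m → Equiv.Perm (Fin K)) (τ : Equiv.Perm (Fin K)) :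
    totalVar (Fin.snoc φ φnew) (Fin.snoc σ τ)
      = (((m : ℝ) - 1) / m) * totalVar φ σ
        + ∑ k : Fin K, ∑ l : Fin p, auxF m (coordMean φ σ k l) (φnew (τ k) l) := by
  unfold totalVar
  rw [Finset.mul_sum, ← Finset.sum_add_distrib]
  refine Finset.sum_congr rfl fun k _ => ?_
  rw [Finset.mul_sum, ← Finset.sum_add_distrib]
  refine Finset.sum_congr rfl fun l _ => ?_
  have hfun : (fun j : Fin (m+1) => (Fin.snoc φ φnew : Fin (m+1) → Fin K → Fin p → ℝ) j ((Fin.snoc σ τ : Fin (m+1) → Equiv.Perm (Fin K)) j k) l)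
      = Fin.snoc (fun j : Fin m => φ j (σ j k) l) (φnew (τ k) l) := by
    funext j
    refine Fin.lastCases ?_ (fun i => ?_) j <;> simp
  rw [hfun, var_snoc m hm]
  rfl


/-- Proposition 1: if `ν*` minimizes the total variance of the first `m` samples, and a
global minimizer `(σ**, τ**)` of `V_{m+1}` has the same coordinatewise sample means on the
first `m` samples as `ν*`, then the global minimum of `V_{m+1}` is attained while keeping
the first `m` samples labelled by `ν*`. -/
theorem min_totalVar_attained_at_nustar {m K p : ℕ} (hm : 2 ≤ m)
    (φ : Fin m → Fin K → Fin p → ℝ) (φnew : Fin K → Fin p → ℝ)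
    (νstar σstar : Fin m → Equiv.Perm (Fin K)) (τstar : Equiv.Perm (Fin K))
    (hν : ∀ σ : Fin m → Equiv.Perm (Fin K), totalVar φ νstar ≤ totalVar φ σ)
    (hmin : ∀ (σ : Fin m → Equiv.Perm (Fin K)) (τ : Equiv.Perm (Fin K)),
      totalVar (Fin.snoc φ φnew) (Fin.snoc σstar τstar)
        ≤ totalVar (Fin.snoc φ φnew) (Fin.snoc σ τ))
    (hmean : ∀ (k : Fin K) (l : Fin p), coordMean φ σstar k l = coordMean φ νstar k l) :
    Finset.univ.inf' Finset.univ_nonempty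
        (fun τ : Equiv.Perm (Fin K) => totalVar (Fin.snoc φ φnew) (Fin.snoc νstar τ))
      = totalVar (Fin.snoc φ φnew) (Fin.snoc σstar τstar) := by
  have hc : (0:ℝ) ≤ ((m : ℝ) - 1) / m := by
    have : (2 : ℝ) ≤ m := by exact_mod_cast hm
    apply div_nonneg <;> linarith
  refine le_antisymm ?_ (Finset.le_inf' _ _ fun τ _ => hmin νstar τ)
  refine le_trans (Finset.inf'_le _ (Finset.mem_univ τstar)) ?_
  rw [totalVar_snoc hm φ φnew νstar τstar, totalVar_snoc hm φ φnew σstar τstar]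
  simp only [hmean]
  have := hν σstar
  nlinarith
end

section
/- Let m ≥ 2 and let φ^1, …, φ^{m+1} be samples in (Fin K → Fin p → ℝ). Let ν* : Fin m → Perm(Fin K) be an assignment minimizing the total variance V_m of the first m samples over all assignments. Then for every assignment σ : Fin m → Perm(Fin K) whose coordinatewise sample means agree with those of ν* (i.e., x̄_{k,l}(σ) = x̄_{k,l}(ν*) for all coordinates (k, l)) and every permutation τ ∈ Perm(Fin K), one has V_{m+1}(ν*, τ) ≤ V_{m+1}(σ, τ), where V_{m+1}(σ, τ) denotes the total variance of the m+1 relabelled samples (σ_j • φ^j)_{j=1,…,m}, τ • φ^{m+1}. -/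
open Finset

lemma sum_sq_sub_mean (m : ℕ) (hm : m ≠ 0) (y : Fin m → ℝ) :
    ∑ j, (y j - sampleMean m y) ^ 2
      = ∑ j, (y j) ^ 2 - (m : ℝ) * (sampleMean m y) ^ 2 := by
  have hm' : (m : ℝ) ≠ 0 := Nat.cast_ne_zero.mpr hm
  have hs : ∑ j, y j = (m : ℝ) * sampleMean m y := by
    unfold sampleMean; field_simp
  have : ∀ j : Fin m, (y j - sampleMean m y) ^ 2
      = (y j) ^ 2 - 2 * sampleMean m y * y j + (sampleMean m y) ^ 2 := fun j => by ring
  simp_rw [this]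
  rw [Finset.sum_add_distrib, Finset.sum_sub_distrib, Finset.sum_const, ← Finset.mul_sum, hs]
  simp [Finset.card_univ]
  ring

lemma var_snoc_sub (m : ℕ) (hm : 2 ≤ m) (y y' : Fin m → ℝ) (z : ℝ)
    (hmean : sampleMean m y = sampleMean m y') :
    sampleVar (m + 1) (Fin.snoc y z) - sampleVar (m + 1) (Fin.snoc y' z)
      = (((m : ℝ) - 1) / m) * (sampleVar m y - sampleVar m y') := by
  have hm0 : (m : ℝ) ≠ 0 := by positivity
  have hm1 : (m : ℝ) - 1 ≠ 0 := by
    have : (2 : ℝ) ≤ m := by exact_mod_cast hm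
    nlinarith
  have hsum : ∀ w : Fin m → ℝ, ∑ j : Fin (m+1), (Fin.snoc w z : Fin (m+1) → ℝ) j
      = (∑ j, w j) + z := by
    intro w
    rw [Fin.sum_univ_castSucc]
    simp
  have hsumsq : ∀ w : Fin m → ℝ, ∑ j : Fin (m+1), ((Fin.snoc w z : Fin (m+1) → ℝ) j) ^ 2
      = (∑ j, (w j) ^ 2) + z ^ 2 := by
    intro w
    rw [Fin.sum_univ_castSucc]
    simp
  have hmean' : ∀ w : Fin m → ℝ, sampleMean (m+1) (Fin.snoc w z)
      = ((m : ℝ) * sampleMean m w + z) / (m + 1) := by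
    intro w
    unfold sampleMean
    rw [hsum]
    push_cast
    field_simp
  have hvar : ∀ w : Fin m → ℝ, sampleVar (m+1) (Fin.snoc w z)
      = (1 / (m : ℝ)) * ((∑ j, (w j) ^ 2) + z ^ 2
          - ((m : ℝ) + 1) * (((m : ℝ) * sampleMean m w + z) / (m + 1)) ^ 2) := by
    intro w
    unfold sampleVar
    rw [sum_sq_sub_mean (m+1) (by omega), hsumsq, hmean' w]
    push_cast
    rw [show ((m:ℝ) + 1 - 1) = (m:ℝ) by ring]
  have hvar' : ∀ w : Fin m → ℝ, sampleVar m w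
      = (1 / ((m : ℝ) - 1)) * ((∑ j, (w j) ^ 2) - (m : ℝ) * (sampleMean m w) ^ 2) := by
    intro w
    unfold sampleVar
    rw [sum_sq_sub_mean m (by omega)]
  rw [hvar y, hvar y', hvar' y, hvar' y', hmean]
  have hm1' : (m : ℝ) + 1 ≠ 0 := by positivity
  field_simp
  ring

lemma snoc_comp {m K p : ℕ} (φ : Fin m → Fin K → Fin p → ℝ) (φnew : Fin K → Fin p → ℝ)
    (ν : Fin m → Equiv.Perm (Fin K)) (τ : Equiv.Perm (Fin K)) (k : Fin K) (l : Fin p) :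
    (fun j => (Fin.snoc φ φnew : Fin (m+1) → Fin K → Fin p → ℝ) j
        ((Fin.snoc ν τ : Fin (m+1) → Equiv.Perm (Fin K)) j k) l)
      = Fin.snoc (fun j => φ j (ν j k) l) (φnew (τ k) l) := by
  funext j
  induction j using Fin.lastCases with
  | last => simp
  | cast i => simp

/-- Intermediate claim in the proof of Proposition 1: if `ν*` minimizes the total variance of
the first `m` samples, then for every assignment `σ` whose coordinatewise sample means agree
with those of `ν*` and every permutation `τ` of the new sample,
`V_{m+1}(ν*, τ) ≤ V_{m+1}(σ, τ)`. -/
theorem totalVar_succ_nustar_le {m K p : ℕ} (hm : 2 ≤ m)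
    (φ : Fin m → Fin K → Fin p → ℝ) (φnew : Fin K → Fin p → ℝ)
    (νstar : Fin m → Equiv.Perm (Fin K))
    (hν : ∀ σ : Fin m → Equiv.Perm (Fin K), totalVar φ νstar ≤ totalVar φ σ)
    (σ : Fin m → Equiv.Perm (Fin K))
    (hmean : ∀ (k : Fin K) (l : Fin p), coordMean φ σ k l = coordMean φ νstar k l)
    (τ : Equiv.Perm (Fin K)) :
    totalVar (Fin.snoc φ φnew) (Fin.snoc νstar τ)
      ≤ totalVar (Fin.snoc φ φnew) (Fin.snoc σ τ) := by
  have key : totalVar (Fin.snoc φ φnew) (Fin.snoc σ τ)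
      - totalVar (Fin.snoc φ φnew) (Fin.snoc νstar τ)
      = (((m : ℝ) - 1) / m) * (totalVar φ σ - totalVar φ νstar) := by
    unfold totalVar
    rw [← Finset.sum_sub_distrib]
    simp_rw [← Finset.sum_sub_distrib]
    rw [Finset.mul_sum]
    refine Finset.sum_congr rfl fun k _ => ?_
    rw [Finset.mul_sum]
    refine Finset.sum_congr rfl fun l _ => ?_
    rw [snoc_comp, snoc_comp]
    exact var_snoc_sub m hm _ _ _ (hmean k l)
  have h1 : 0 ≤ (((m : ℝ) - 1) / m) * (totalVar φ σ - totalVar φ νstar) := by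
    apply mul_nonneg
    · apply div_nonneg
      · have : (2 : ℝ) ≤ m := by exact_mod_cast hm
        linarith
      · positivity
    · linarith [hν σ]
  linarith [key]
end
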